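/- (Lemma 1, Optimality of the weight matrix.) Assume Condition C.1, that E[‖ψ(β₀, Y_1)‖²] < ∞, and that for each j = 1, …, J the block estimators β̂_{j,N} converge in probability to β₀ as N → ∞. Then the weight matrix V̂_N converges in probability to the variability matrix v(β₀) as N → ∞ (entrywise, equivalently in any matrix norm). -/

import Mathlib

open MeasureTheory ProbabilityTheory Filter Matrix
open scoped ENNReal NNReal RealInnerProductSpace BigOperators Classical

noncomputable section DIMMSetup

/-- The standard Gaussian measure on `EuclideanSpace ℝ ι`: the pushforward of the
`ι`-indexed product of standard real Gaussians under the canonical identification. -/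
def stdGaussian (ι : Type*) [Fintype ι] : Measure (EuclideanSpace ℝ ι) :=
  Measure.map (⇑(EuclideanSpace.equiv ι ℝ).symm) (Measure.pi fun _ : ι => gaussianReal 0 1)

/-- The positive semidefinite square root of a matrix (junk value `0` when the matrix is
not positive semidefinite). -/
def matSqrt {ι : Type*} [Fintype ι] [DecidableEq ι] (S : Matrix ι ι ℝ) : Matrix ι ι ℝ :=
  if h : S.PosSemidef then
    h.1.eigenvectorUnitary.1 * diagonal ((↑) ∘ (Real.sqrt ·) ∘ h.1.eigenvalues) *
      (star h.1.eigenvectorUnitary : Matrix ι ι ℝ)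
  else 0

/-- Matrix-vector multiplication as a map of Euclidean spaces. -/
def mulVecE {m n : Type*} [Fintype n] (A : Matrix m n ℝ) (x : EuclideanSpace ℝ n) :
    EuclideanSpace ℝ m :=
  (WithLp.equiv 2 (m → ℝ)).symm (A.mulVec ((WithLp.equiv 2 (n → ℝ)) x))

/-- The multivariate normal distribution `N(0, S)`: the pushforward of the standard Gaussian
under `x ↦ S^{1/2} x`, where `S^{1/2}` is the positive semidefinite square root. -/
def mvNormal {ι : Type*} [Fintype ι] [DecidableEq ι] (S : Matrix ι ι ℝ) :
    Measure (EuclideanSpace ℝ ι) :=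
  (stdGaussian ι).map (fun x => mulVecE (matSqrt S) x)

/-- The chi-squared distribution with `k` degrees of freedom: the law of `‖Z‖²` for a
standard Gaussian `Z` on `ℝ^k`. -/
def chiSq (k : ℕ) : Measure ℝ :=
  (stdGaussian (Fin k)).map (fun x => ‖x‖ ^ 2)

/-- Convergence in distribution: weak convergence of the laws of the random elements
`X N` to the measure `μ`. -/
def ConvInDist {Ω V : Type*} [MeasurableSpace Ω] [TopologicalSpace V] [MeasurableSpace V]
    (P : Measure Ω) (X : ℕ → Ω → V) (μ : Measure V) : Prop :=
  ∀ f : BoundedContinuousFunction V ℝ,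
    Tendsto (fun N => ∫ ω, f (X N ω) ∂P) atTop (nhds (∫ x, f x ∂μ))

/-- The ℓ²→ℓ² operator norm of a matrix (the operator norm induced by the Euclidean norms). -/
def opNorm {m n : Type*} [Fintype m] [Fintype n] [DecidableEq n] (A : Matrix m n ℝ) : ℝ :=
  ‖LinearMap.toContinuousLinearMap (Matrix.toEuclideanLin A)‖

/-- A sequence of real random variables is bounded in probability (`O_p(1)`): for every
`ε > 0` there is `M` with `limsup_N P(|X_N| > M) < ε`. -/
def BddInProb {Ω : Type*} [MeasurableSpace Ω] (P : Measure Ω) (X : ℕ → Ω → ℝ) : Prop :=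
  ∀ ε : ℝ≥0∞, 0 < ε → ∃ M : ℝ, Filter.limsup (fun N => P {ω | M < |X N ω|}) atTop < ε

/-- The `(i,j)`-th `p × p` block of a `(Jp) × (Jp)` matrix, where `ℝ^{Jp}` is indexed by
`Fin J × Fin p` (the pair `(j, a)` encodes coordinate `(j-1)p + a`). -/
def blockOf {J p : ℕ} (W : Matrix (Fin J × Fin p) (Fin J × Fin p) ℝ) (i j : Fin J) :
    Matrix (Fin p) (Fin p) ℝ :=
  fun a b => W (i, a) (j, b)

/-- The `j`-th `p × p` block of a `(Jp) × p` matrix (the `j`-th block of rows). -/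
def rowBlockOf {J p : ℕ} (S : Matrix (Fin J × Fin p) (Fin p) ℝ) (j : Fin J) :
    Matrix (Fin p) (Fin p) ℝ :=
  fun a b => S (j, a) b

end DIMMSetup

/-!
By the strong law of large numbers, the sample means of `ψ_k(β₀, Y) ψ_l(β₀, Y)` and of
`‖ψ(β₀, Y)‖` converge almost surely. Where `ψ` is `C`-Lipschitz, plugging the estimators in for
`β₀` moves each summand by at most `a b + (a + b) ‖ψ(β₀, Y_i)‖`, with `a, b` equal to `C` times
the estimation errors, so the entry of `V̂_N` tracks the ideal sample mean along any sequence on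
which the estimators converge. The estimators converge only in probability, so the argument
runs along subsequences: every subsequence has a further one converging almost surely, and
that characterises convergence in probability.
-/

open scoped Topology

noncomputable def sampleMean (x : ℕ → ℝ) (N : ℕ) : ℝ := (N : ℝ)⁻¹ * ∑ i ∈ Finset.range N, x i

theorem abs_mul_sub_mul_le (a b a₀ b₀ : ℝ) :
    |a * b - a₀ * b₀| ≤ |a - a₀| * |b - b₀| + |a - a₀| * |b₀| + |a₀| * |b - b₀| :=
  calc |a * b - a₀ * b₀| = |(a - a₀) * (b - b₀) + (a - a₀) * b₀ + a₀ * (b - b₀)| := by ring_nf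
    _ ≤ |(a - a₀) * (b - b₀)| + |(a - a₀) * b₀| + |a₀ * (b - b₀)| := abs_add_three _ _ _
    _ = _ := by simp only [abs_mul]

theorem abs_sampleMean_sub_le {x y z : ℕ → ℝ} (N : ℕ) (h : ∀ i, |x i - y i| ≤ z i) :
    |sampleMean x N - sampleMean y N| ≤ sampleMean z N := by
  rw [sampleMean, sampleMean, sampleMean, ← mul_sub, ← Finset.sum_sub_distrib, abs_mul,
    abs_of_nonneg (by positivity)]
  gcongr
  exact (Finset.abs_sum_le_sum_abs _ _).trans (Finset.sum_le_sum fun i _ => h i)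

theorem sampleMean_add_mul_le {c d : ℝ} (hc : 0 ≤ c) (x : ℕ → ℝ) (N : ℕ) :
    sampleMean (fun i => c + d * x i) N ≤ c + d * sampleMean x N := by
  have hN : (N : ℝ)⁻¹ * N ≤ 1 := by
    rcases N.eq_zero_or_pos with rfl | hN
    · simp
    · rw [inv_mul_cancel₀ (by positivity)]
  simp only [sampleMean, Finset.sum_add_distrib, Finset.sum_const, Finset.card_range,
    nsmul_eq_mul, ← Finset.mul_sum]
  nlinarith

theorem abs_sampleMean_mul_sub_le {u w u₀ w₀ G : ℕ → ℝ} {a b : ℝ} (N : ℕ)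
    (hu : ∀ i, |u i - u₀ i| ≤ a) (hw : ∀ i, |w i - w₀ i| ≤ b)
    (hu₀ : ∀ i, |u₀ i| ≤ G i) (hw₀ : ∀ i, |w₀ i| ≤ G i) :
    |sampleMean (fun i => u i * w i) N - sampleMean (fun i => u₀ i * w₀ i) N| ≤
      a * b + (a + b) * sampleMean G N := by
  have ha : 0 ≤ a := (abs_nonneg _).trans (hu 0)
  refine (abs_sampleMean_sub_le N fun i => ?_).trans (sampleMean_add_mul_le
    (mul_nonneg ha ((abs_nonneg _).trans (hw 0))) G N)
  calc |u i * w i - u₀ i * w₀ i|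
      ≤ |u i - u₀ i| * |w i - w₀ i| + |u i - u₀ i| * |w₀ i| + |u₀ i| * |w i - w₀ i| :=
        abs_mul_sub_mul_le _ _ _ _
    _ ≤ a * b + a * G i + G i * b := by
        have hG : 0 ≤ G i := (abs_nonneg _).trans (hu₀ i)
        gcongr <;> apply_assumption
    _ = a * b + (a + b) * G i := by ring

theorem tendsto_sampleMean_mul_of_lipschitz {B E : Type*} [SeminormedAddCommGroup B]
    {f g : B → E → ℝ} {G : E → ℝ} {β₀ : B} {C : ℝ}
    (hf : ∀ᶠ β in 𝓝 β₀, ∀ e, |f β e - f β₀ e| ≤ C * ‖β - β₀‖)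
    (hg : ∀ᶠ β in 𝓝 β₀, ∀ e, |g β e - g β₀ e| ≤ C * ‖β - β₀‖)
    (hfG : ∀ e, |f β₀ e| ≤ G e) (hgG : ∀ e, |g β₀ e| ≤ G e)
    {y : ℕ → E} {N : ℕ → ℕ} {βf βg : ℕ → B} {M v : ℝ}
    (hβf : Tendsto βf atTop (𝓝 β₀)) (hβg : Tendsto βg atTop (𝓝 β₀))
    (hG : Tendsto (fun n => sampleMean (fun i => G (y i)) (N n)) atTop (𝓝 M))
    (hfg : Tendsto (fun n => sampleMean (fun i => f β₀ (y i) * g β₀ (y i)) (N n)) atTop (𝓝 v)) :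
    Tendsto (fun n => sampleMean (fun i => f (βf n) (y i) * g (βg n) (y i)) (N n))
      atTop (𝓝 v) := by
  have ha : Tendsto (fun n => C * ‖βf n - β₀‖) atTop (𝓝 0) := by
    simpa using (tendsto_iff_norm_sub_tendsto_zero.1 hβf).const_mul C
  have hb : Tendsto (fun n => C * ‖βg n - β₀‖) atTop (𝓝 0) := by
    simpa using (tendsto_iff_norm_sub_tendsto_zero.1 hβg).const_mul C
  have hdiff : Tendsto (fun n => sampleMean (fun i => f (βf n) (y i) * g (βg n) (y i)) (N n) -
      sampleMean (fun i => f β₀ (y i) * g β₀ (y i)) (N n)) atTop (𝓝 0) := by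
    refine squeeze_zero_norm' ?_ (by simpa using (ha.mul hb).add ((ha.add hb).mul hG))
    filter_upwards [hβf.eventually hf, hβg.eventually hg] with n hfn hgn
    exact abs_sampleMean_mul_sub_le _ (fun i => hfn _) (fun i => hgn _) (fun i => hfG _)
      fun i => hgG _
  simpa using hdiff.add hfg

theorem ae_tendsto_sampleMean_comp {Ω E : Type*} [MeasurableSpace Ω] [MeasurableSpace E]
    {P : Measure Ω} {Y : ℕ → Ω → E} (hindep : Pairwise fun i j => IndepFun (Y i) (Y j) P)
    (hident : ∀ i, IdentDistrib (Y i) (Y 0) P P) {f : E → ℝ} (hf : Measurable f)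
    (hint : Integrable (fun ω => f (Y 0 ω)) P) :
    ∀ᵐ ω ∂P, Tendsto (fun N => sampleMean (fun i => f (Y i ω)) N) atTop
      (𝓝 (∫ ω, f (Y 0 ω) ∂P)) := by
  simpa [sampleMean] using strong_law_ae (fun i ω => f (Y i ω)) hint
    (fun i j hij => (hindep hij).comp hf hf) fun i => (hident i).comp hf

theorem aemeasurable_sampleMean {Ω : Type*} [MeasurableSpace Ω] {μ : Measure Ω}
    {x : ℕ → Ω → ℝ} (hx : ∀ i, AEMeasurable (x i) μ) (N : ℕ) :
    AEMeasurable (fun ω => sampleMean (fun i => x i ω) N) μ :=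
  (Finset.aemeasurable_fun_sum _ fun i _ => hx i).const_mul _

theorem MeasureTheory.MemLp.integrable_apply_mul_apply {Ω ι : Type*} [MeasurableSpace Ω]
    {μ : Measure Ω} [Fintype ι] {X : Ω → EuclideanSpace ℝ ι} (hX : MemLp X 2 μ) (k l : ι) :
    Integrable (fun ω => X ω k * X ω l) μ :=
  ((EuclideanSpace.proj (𝕜 := ℝ) k).comp_memLp' hX).integrable_mul
    ((EuclideanSpace.proj (𝕜 := ℝ) l).comp_memLp' hX)

theorem MeasureTheory.TendstoInMeasure.prodMk {α ι E F : Type*} [MeasurableSpace α]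
    {μ : Measure α} [PseudoEMetricSpace E] [PseudoEMetricSpace F] {l : Filter ι}
    {f : ι → α → E} {g : ι → α → F} {f₀ : α → E} {g₀ : α → F}
    (hf : TendstoInMeasure μ f l f₀) (hg : TendstoInMeasure μ g l g₀) :
    TendstoInMeasure μ (fun i x => (f i x, g i x)) l fun x => (f₀ x, g₀ x) := by
  intro ε hε
  have hsum := (hf ε hε).add (hg ε hε)
  rw [zero_add] at hsum
  refine tendsto_of_tendsto_of_tendsto_of_le_of_le tendsto_const_nhds hsum (fun _ => bot_le)
    fun i => (measure_mono fun x hx => ?_).trans (measure_union_le _ _)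
  simpa [Prod.edist_eq, le_max_iff] using hx

theorem dimm_lemma1_weight_matrix_optimality_general
    {Ω : Type*} [MeasurableSpace Ω] (P : Measure Ω) [IsProbabilityMeasure P]
    {E : Type*} [MeasurableSpace E]
    (p J : ℕ)
    -- the i.i.d. data
    (Y : ℕ → Ω → E)
    (hYindep : iIndepFun Y P)
    (hYident : ∀ i, IdentDistrib (Y i) (Y 0) P P)
    -- the estimating function and its population quantities
    (ψ : EuclideanSpace ℝ (Fin p) → E → EuclideanSpace ℝ (Fin J × Fin p))
    (hψmeas : Measurable fun x : EuclideanSpace ℝ (Fin p) × E => ψ x.1 x.2)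
    (β₀ : EuclideanSpace ℝ (Fin p))
    (v : EuclideanSpace ℝ (Fin p) → Matrix (Fin J × Fin p) (Fin J × Fin p) ℝ)
    (hv : ∀ β k l, v β k l = ∫ ω, ψ β (Y 0 ω) k * ψ β (Y 0 ω) l ∂P)
    -- Condition C.1: unique zero, positive definite (hence symmetric) variability matrix,
    -- and uniform Lipschitz continuity of ψ on a neighbourhood of β₀
    (Nbd : Set (EuclideanSpace ℝ (Fin p))) (hNbd : Nbd ∈ nhds β₀)
    (C : ℝ)
    (hLip : ∀ β₁ ∈ Nbd, ∀ β₂ ∈ Nbd, ∀ e : E, ‖ψ β₁ e - ψ β₂ e‖ ≤ C * ‖β₁ - β₂‖)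
    -- finite second moment: E‖ψ(β₀, Y₁)‖² < ∞
    (hmom : Integrable (fun ω => ‖ψ β₀ (Y 0 ω)‖ ^ 2) P)
    -- measurable block estimators, consistent for β₀
    (βhat : ℕ → Fin J → Ω → EuclideanSpace ℝ (Fin p))
    (hβhatmeas : ∀ N j, Measurable (βhat N j))
    (hβhatcons : ∀ j, TendstoInMeasure P (fun N => βhat N j) atTop (fun _ => β₀))
    -- the weight matrix V̂_N = (1/N) Σᵢ ψ̂ᵢᴺ (ψ̂ᵢᴺ)ᵀ, with j-th block of ψ̂ᵢᴺ equal to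
    -- ψ_j(β̂_{j,N}, Y_i)
    (Vhat : ℕ → Ω → Matrix (Fin J × Fin p) (Fin J × Fin p) ℝ)
    (hVhat : ∀ N ω k l, Vhat N ω k l = (N : ℝ)⁻¹ *
      ∑ i ∈ Finset.range N, ψ (βhat N k.1 ω) (Y i ω) k * ψ (βhat N l.1 ω) (Y i ω) l) :
    -- conclusion: V̂_N → v(β₀) in probability, entrywise
    ∀ k l, TendstoInMeasure P (fun N ω => Vhat N ω k l) atTop (fun _ => v β₀ k l) := by
  intro k l
  have hY : ∀ i, AEMeasurable (Y i) P := fun i => (hYident i).aemeasurable_fst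
  have hψ₀ : Measurable (ψ β₀) := hψmeas.comp (measurable_const.prodMk measurable_id)
  have hL2 : MemLp (fun ω => ψ β₀ (Y 0 ω)) 2 P :=
    (memLp_two_iff_integrable_sq_norm (hψ₀.comp_aemeasurable (hY 0)).aestronglyMeasurable).2 hmom
  have hpair : Pairwise fun i j => IndepFun (Y i) (Y j) P := fun i j hij => hYindep.indepFun hij
  have hprod := ae_tendsto_sampleMean_comp hpair hYident (f := fun e => ψ β₀ e k * ψ β₀ e l)
    (by fun_prop) (hL2.integrable_apply_mul_apply k l)
  rw [← hv] at hprod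
  have hnorm := ae_tendsto_sampleMean_comp hpair hYident hψ₀.norm (hL2.integrable one_le_two).norm
  have hcoordLip (j) : ∀ᶠ β in 𝓝 β₀, ∀ e, |ψ β e j - ψ β₀ e j| ≤ C * ‖β - β₀‖ := by
    filter_upwards [hNbd] with β hβ e
    simpa using (PiLp.norm_apply_le _ j).trans (hLip β hβ β₀ (mem_of_mem_nhds hNbd) e)
  have hcoordBound (j) (e : E) : |ψ β₀ e j| ≤ ‖ψ β₀ e‖ := PiLp.norm_apply_le (ψ β₀ e) j
  have hcoordMeas (N j i a) : AEMeasurable (fun ω => ψ (βhat N j ω) (Y i ω) a) P :=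
    (EuclideanSpace.proj (𝕜 := ℝ) a).continuous.measurable.comp_aemeasurable
      (hψmeas.comp_aemeasurable ((hβhatmeas N j).aemeasurable.prodMk (hY i)))
  have hVmeas (N) : AEStronglyMeasurable (fun ω => Vhat N ω k l) P := by
    simp only [hVhat]
    exact (aemeasurable_sampleMean (fun i => (hcoordMeas N k.1 i k).mul
      (hcoordMeas N l.1 i l)) N).aestronglyMeasurable
  rw [exists_seq_tendstoInMeasure_atTop_iff hVmeas]
  intro ns hns
  obtain ⟨ms, hms, hβ⟩ :=
    (((hβhatcons k.1).prodMk (hβhatcons l.1)).comp hns.tendsto_atTop).exists_seq_tendsto_ae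
  have hsub : Tendsto (fun n => ns (ms n)) atTop atTop := (hns.comp hms).tendsto_atTop
  refine ⟨ms, hms, ?_⟩
  filter_upwards [hprod, hnorm, hβ] with ω hprodω hnormω hβω
  simp only [hVhat]
  exact tendsto_sampleMean_mul_of_lipschitz (hcoordLip k) (hcoordLip l) (hcoordBound k)
    (hcoordBound l) hβω.fst_nhds hβω.snd_nhds (hnormω.comp hsub) (hprodω.comp hsub)

/-- **Lemma 1 (Optimality of the weight matrix).**
Under Condition C.1, a finite second moment of `ψ(β₀, Y₁)`, and consistency of the block
estimators `β̂_{j,N}`, the weight matrix `V̂_N` converges in probability (entrywise) to the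
variability matrix `v(β₀)`. -/
theorem dimm_lemma1_weight_matrix_optimality
    {Ω : Type*} [MeasurableSpace Ω] (P : Measure Ω) [IsProbabilityMeasure P]
    {E : Type*} [MeasurableSpace E]
    (p J : ℕ) (hp : 0 < p) (hJ : 0 < J)
    -- the i.i.d. data
    (Y : ℕ → Ω → E) (hYmeas : ∀ i, Measurable (Y i))
    (hYindep : iIndepFun Y P)
    (hYident : ∀ i, IdentDistrib (Y i) (Y 0) P P)
    -- the estimating function and its population quantities
    (ψ : EuclideanSpace ℝ (Fin p) → E → EuclideanSpace ℝ (Fin J × Fin p))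
    (hψmeas : Measurable fun x : EuclideanSpace ℝ (Fin p) × E => ψ x.1 x.2)
    (β₀ : EuclideanSpace ℝ (Fin p))
    (m : EuclideanSpace ℝ (Fin p) → EuclideanSpace ℝ (Fin J × Fin p))
    (hm : ∀ β, m β = ∫ ω, ψ β (Y 0 ω) ∂P)
    (v : EuclideanSpace ℝ (Fin p) → Matrix (Fin J × Fin p) (Fin J × Fin p) ℝ)
    (hv : ∀ β k l, v β k l = ∫ ω, ψ β (Y 0 ω) k * ψ β (Y 0 ω) l ∂P)
    -- Condition C.1: unique zero, positive definite (hence symmetric) variability matrix,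
    -- and uniform Lipschitz continuity of ψ on a neighbourhood of β₀
    (hzero : ∀ β, m β = 0 ↔ β = β₀)
    (hvpd : (v β₀).PosDef)
    (Nbd : Set (EuclideanSpace ℝ (Fin p))) (hNbd : Nbd ∈ nhds β₀)
    (C : ℝ) (hCpos : 0 < C)
    (hLip : ∀ β₁ ∈ Nbd, ∀ β₂ ∈ Nbd, ∀ e : E, ‖ψ β₁ e - ψ β₂ e‖ ≤ C * ‖β₁ - β₂‖)
    -- finite second moment: E‖ψ(β₀, Y₁)‖² < ∞
    (hmom : Integrable (fun ω => ‖ψ β₀ (Y 0 ω)‖ ^ 2) P)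
    -- measurable block estimators, consistent for β₀
    (βhat : ℕ → Fin J → Ω → EuclideanSpace ℝ (Fin p))
    (hβhatmeas : ∀ N j, Measurable (βhat N j))
    (hβhatcons : ∀ j, TendstoInMeasure P (fun N => βhat N j) atTop (fun _ => β₀))
    -- the weight matrix V̂_N = (1/N) Σᵢ ψ̂ᵢᴺ (ψ̂ᵢᴺ)ᵀ, with j-th block of ψ̂ᵢᴺ equal to
    -- ψ_j(β̂_{j,N}, Y_i)
    (Vhat : ℕ → Ω → Matrix (Fin J × Fin p) (Fin J × Fin p) ℝ)
    (hVhat : ∀ N ω k l, Vhat N ω k l = (N : ℝ)⁻¹ *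
      ∑ i ∈ Finset.range N, ψ (βhat N k.1 ω) (Y i ω) k * ψ (βhat N l.1 ω) (Y i ω) l) :
    -- conclusion: V̂_N → v(β₀) in probability, entrywise
    ∀ k l, TendstoInMeasure P (fun N ω => Vhat N ω k l) atTop (fun _ => v β₀ k l) :=
  dimm_lemma1_weight_matrix_optimality_general P p J Y hYindep hYident ψ hψmeas β₀ v hv Nbd hNbd C
    hLip hmom βhat hβhatmeas hβhatcons Vhat hVhat
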